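/- arXiv:2404.07111 — 4 statements merged into one kernel-verified Lean document; each statement's English description precedes it below -/
import Mathlib

section
/- Let F be a field and n a positive integer. Let J_n be the n×n matrix over F with (J_n)_{k,ℓ} = 1 if k+ℓ = n+1 and 0 otherwise, and let S be the 2n×2n block matrix [[0, −J_n],[J_n, 0]]. Then every matrix X ∈ M_{2n}(F) satisfying Xᵀ S X = S has det X = 1. In particular, every element of Sp_{2n}(F) automatically has determinant 1. -/
open Matrix

/-!
`J_n` is the permutation matrix of `Fin.revPerm`, an involution, so `Q = diag(1, J_n)` is
invertible and `S = Qᵀ (Matrix.J) Q` for Mathlib's standard form `Matrix.J = [[0, -1], [1, 0]]`.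
Hence `Q X Q⁻¹` lies in `Matrix.symplecticGroup`, whose elements have determinant `1`
(`SymplecticGroup.det_eq_one`), and `det X = det (Q X Q⁻¹)`.
-/

namespace Matrix

variable {m R : Type*} [Fintype m] [DecidableEq m] [CommRing R]

theorem transpose_conj_mul_mul_conj_eq {Q M X : Matrix m m R} (hQ : IsUnit Q)
    (hX : Xᵀ * (Qᵀ * M * Q) * X = Qᵀ * M * Q) :
    (Q * X * Q⁻¹)ᵀ * M * (Q * X * Q⁻¹) = M := by
  have hQQ : Q * Q⁻¹ = 1 := mul_nonsing_inv Q ((isUnit_iff_isUnit_det Q).mp hQ)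
  calc (Q * X * Q⁻¹)ᵀ * M * (Q * X * Q⁻¹)
      = (Q⁻¹)ᵀ * (Xᵀ * (Qᵀ * M * Q) * X) * Q⁻¹ := by
        simp only [transpose_mul, Matrix.mul_assoc]
    _ = (Q * Q⁻¹)ᵀ * M * (Q * Q⁻¹) := by
        rw [hX, transpose_mul]; simp only [Matrix.mul_assoc]
    _ = M := by rw [hQQ, transpose_one, Matrix.one_mul, Matrix.mul_one]

theorem det_eq_one_of_preserves_transpose_mul_J_mul {l : Type*} [Fintype l] [DecidableEq l]
    {Q X : Matrix (l ⊕ l) (l ⊕ l) R} (hQ : IsUnit Q)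
    (hX : Xᵀ * (Qᵀ * J l R * Q) * X = Qᵀ * J l R * Q) : X.det = 1 := by
  rw [← det_conj hQ X]
  exact SymplecticGroup.det_eq_one
    (SymplecticGroup.mem_iff'.mpr (transpose_conj_mul_mul_conj_eq hQ hX))

theorem antidiagonal_eq_permMatrix_revPerm (n : ℕ) :
    (of fun k l : Fin n => if (k : ℕ) + l + 1 = n then (1 : R) else 0) =
      Fin.revPerm.permMatrix R := by
  ext k l
  simp only [of_apply, PEquiv.toMatrix_apply, Equiv.toPEquiv_apply, Option.mem_def,
    Option.some.injEq, Fin.revPerm_apply, Fin.ext_iff, Fin.val_rev]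
  congr 1
  apply propext
  omega

end Matrix

theorem stmt_0_general (F : Type*) [Field F] (n : ℕ)
    (J : Matrix (Fin n) (Fin n) F)
    (hJ : J = Matrix.of fun (k l : Fin n) => if (k : ℕ) + (l : ℕ) + 1 = n then 1 else 0)
    (S : Matrix (Fin n ⊕ Fin n) (Fin n ⊕ Fin n) F)
    (hS : S = Matrix.fromBlocks 0 (-J) J 0)
    (X : Matrix (Fin n ⊕ Fin n) (Fin n ⊕ Fin n) F)
    (hX : Xᵀ * S * X = S) :
    X.det = 1 := by
  rw [antidiagonal_eq_permMatrix_revPerm] at hJ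
  set Q : Matrix (Fin n ⊕ Fin n) (Fin n ⊕ Fin n) F := fromBlocks 1 0 0 J
  have hQ : IsUnit Q := by
    rw [isUnit_iff_isUnit_det, det_fromBlocks_zero₁₂, det_one, one_mul, hJ, det_permutation]
    exact (Equiv.Perm.sign _).isUnit.map (Int.castRingHom F)
  have hSQ : S = Qᵀ * Matrix.J (Fin n) F * Q := by
    simp [hS, Q, Matrix.J, fromBlocks_transpose, fromBlocks_multiply, hJ, Equiv.Perm.inv_def,
      Fin.revPerm_symm]
  rw [hSQ] at hX
  exact det_eq_one_of_preserves_transpose_mul_J_mul hQ hX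

/-- For the symplectic form `S = [[0, -J_n],[J_n, 0]]` (with `J_n` the antidiagonal
matrix of ones), any matrix `X` with `Xᵀ S X = S` has determinant `1`. -/
theorem stmt_0 (F : Type*) [Field F] (n : ℕ) (hn : 0 < n)
    (J : Matrix (Fin n) (Fin n) F)
    (hJ : J = Matrix.of fun (k l : Fin n) => if (k : ℕ) + (l : ℕ) + 1 = n then 1 else 0)
    (S : Matrix (Fin n ⊕ Fin n) (Fin n ⊕ Fin n) F)
    (hS : S = Matrix.fromBlocks 0 (-J) J 0)
    (X : Matrix (Fin n ⊕ Fin n) (Fin n ⊕ Fin n) F)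
    (hX : Xᵀ * S * X = S) :
    X.det = 1 :=
  stmt_0_general F n J hJ S hS X hX
end

section
/- Let F be a field and n ≥ 1. Define an action of the group (F^×)ⁿ on the set (F^×)ⁿ by (a·k)_i = a_i a_{i+1}^{-1} k_i for 1 ≤ i ≤ n−1 and (a·k)_n = a_n² k_n. Then two tuples k, k' ∈ (F^×)ⁿ lie in the same orbit if and only if k'_n k_n^{-1} is a square in F^×. In particular, the orbit space is in bijection with F^×/(F^×)². -/
/-!
Since `a_{n-1}` only enters the last coordinate, through `a_{n-1}²`, the ratio of the last
coordinates of `k` and `a·k` is always a square. Conversely, the first `n-1` equations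
`a_i a_{i+1}⁻¹ = k'_i k_i⁻¹` are solved from any prescribed `a_{n-1} = c` by telescoping
products, and the last equation then asks exactly for `c² = k'_{n-1} k_{n-1}⁻¹`.
-/

theorem exists_mul_inv_succ_eq {G : Type*} [CommGroup G] (N : ℕ) (r : ℕ → G) (c : G) :
    ∃ a : ℕ → G, a N = c ∧ ∀ m < N, a m * (a (m + 1))⁻¹ = r m := by
  refine ⟨fun m => c * ∏ j ∈ Finset.Ico m N, r j, by simp, fun m hm => ?_⟩
  simp only [Finset.prod_eq_prod_Ico_succ_bot hm]
  rw [mul_inv_eq_iff_eq_mul]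
  exact mul_left_comm _ _ _

/-- The torus action on Whittaker data for `Sp_{2n}(F)`:
`(a·k)_i = a_i a_{i+1}⁻¹ k_i` for `i < n-1` and `(a·k)_{n-1} = a_{n-1}² k_{n-1}`
(zero-based indexing). Two tuples lie in the same orbit iff the ratio of their
last coordinates is a square; so orbits are parameterized by `F^×/(F^×)²`. -/
theorem stmt_7 (F : Type*) [Field F] (n : ℕ) (hn : 0 < n)
    (act : (Fin n → Fˣ) → (Fin n → Fˣ) → (Fin n → Fˣ))
    (hact : ∀ (a k : Fin n → Fˣ) (i : Fin n), act a k i =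
      if h : (i : ℕ) + 1 < n then a i * (a ⟨(i : ℕ) + 1, h⟩)⁻¹ * k i
      else (a i) ^ 2 * k i)
    (k k' : Fin n → Fˣ) :
    (∃ a : Fin n → Fˣ, act a k = k') ↔
      ∃ c : Fˣ, k' ⟨n - 1, by omega⟩ * (k ⟨n - 1, by omega⟩)⁻¹ = c ^ 2 := by
  set last : Fin n := ⟨n - 1, by omega⟩
  constructor
  · rintro ⟨a, rfl⟩
    refine ⟨a last, ?_⟩
    rw [hact, dif_neg (by simp [last]; omega)]
    group
  · rintro ⟨c, hc⟩
    obtain ⟨b, hb_last, hb_ratio⟩ := exists_mul_inv_succ_eq (n - 1)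
      (fun m => if h : m < n then k' ⟨m, h⟩ * (k ⟨m, h⟩)⁻¹ else 1) c
    refine ⟨fun i => b i, funext fun i => ?_⟩
    rw [hact]
    split_ifs with h
    · rw [hb_ratio i (by omega), dif_pos i.isLt]
      group
    · obtain rfl : i = last := Fin.ext (by simp [last]; omega)
      rw [hb_last, ← hc]
      group
end

section
/- Let F be a field and n ≥ 2. Define an action of the group (F^×)ⁿ on the set (F^×)ⁿ by (a·k)_i = a_i a_{i+1}^{-1} k_i for 1 ≤ i ≤ n−1 and (a·k)_n = a_{n−1} a_n k_n. Then two tuples k, k' ∈ (F^×)ⁿ lie in the same orbit if and only if (k_{n−1}^{-1} k_n)(k'_{n−1}^{-1} k'_n)^{-1} is a square in F^×. In particular, the orbit space is in bijection with F^×/(F^×)². -/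
/-!
Write the action as `a • k = α(a) * k`, where `α(a) ∈ (F^×)ⁿ` lists the values of the simple roots
on `a`. Then `k` and `k'` lie in one orbit iff `k * k'⁻¹` lies in the image of the homomorphism `α`.
The quotient `q(k) = k_{n-1}⁻¹ k_n` of the two fork coordinates is a homomorphism with
`q(α(a)) = a_n²`, and conversely every `d` with `q(d) = c²` is `α(a)` for the `a` obtained by
solving `a_i = d_i a_{i+1}` downwards from `a_n = c`. So the image of `α` is `q⁻¹((F^×)²)`.
-/

open Finset

lemma exists_eq_mul_succ {M : Type*} [CommMonoid M] (g : ℕ → M) (m : ℕ) (b : M) :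
    ∃ f : ℕ → M, f m = b ∧ ∀ i < m, f i = g i * f (i + 1) := by
  refine ⟨fun i => (∏ j ∈ Ico i m, g j) * b, by simp, fun i hi => ?_⟩
  simp only [prod_eq_prod_Ico_succ_bot hi, mul_assoc]

section

variable {G : Type*} [CommGroup G] {n : ℕ} (hn : 2 ≤ n)

def penultIndex : Fin n := ⟨n - 2, Nat.sub_lt_self two_pos hn⟩

def lastIndex : Fin n := ⟨n - 1, Nat.sub_lt_self one_pos (one_le_two.trans hn)⟩

/-- The values of the simple roots `e_1 - e_2, …, e_{n-1} - e_n, e_{n-1} + e_n` of `SO_{2n}` on the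
torus element `a`, indexed from `0`. -/
def simpleRootValues : (Fin n → G) →* (Fin n → G) where
  toFun a i := if h : (i : ℕ) + 1 < n then a i * (a ⟨(i : ℕ) + 1, h⟩)⁻¹
    else a (penultIndex hn) * a i
  map_one' := by ext; simp
  map_mul' a b := by
    ext i
    simp only [Pi.mul_apply, mul_inv]
    split_ifs <;> exact mul_mul_mul_comm ..

def forkQuotient : (Fin n → G) →* G where
  toFun k := (k (penultIndex hn))⁻¹ * k (lastIndex hn)
  map_one' := by simp
  map_mul' a b := by
    simp only [Pi.mul_apply, mul_inv]
    exact mul_mul_mul_comm ..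

lemma simpleRootValues_penultIndex (a : Fin n → G) :
    simpleRootValues hn a (penultIndex hn) = a (penultIndex hn) * (a (lastIndex hn))⁻¹ := by
  simp only [simpleRootValues, MonoidHom.coe_mk, OneHom.coe_mk]
  rw [dif_pos (by simp only [penultIndex]; omega)]
  congr 3
  simp only [penultIndex, lastIndex, Fin.mk.injEq]
  omega

lemma simpleRootValues_lastIndex (a : Fin n → G) :
    simpleRootValues hn a (lastIndex hn) = a (penultIndex hn) * a (lastIndex hn) := by
  simp only [simpleRootValues, MonoidHom.coe_mk, OneHom.coe_mk]
  rw [dif_neg (by simp only [lastIndex]; omega)]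

lemma forkQuotient_simpleRootValues (a : Fin n → G) :
    forkQuotient hn (simpleRootValues hn a) = a (lastIndex hn) ^ 2 := by
  simp only [forkQuotient, MonoidHom.coe_mk, OneHom.coe_mk, simpleRootValues_penultIndex,
    simpleRootValues_lastIndex]
  simp [mul_comm, mul_left_comm, pow_two]

lemma mem_range_simpleRootValues_iff (d : Fin n → G) :
    d ∈ (simpleRootValues hn).range ↔ IsSquare (forkQuotient hn d) := by
  constructor
  · rintro ⟨a, rfl⟩
    rw [forkQuotient_simpleRootValues]
    exact IsSquare.sq _
  · rintro ⟨c, hc⟩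
    obtain ⟨f, hf_last, hf_succ⟩ :=
      exists_eq_mul_succ (fun j => if h : j < n then d ⟨j, h⟩ else 1) (n - 1) c
    refine ⟨fun i => f i, funext fun i => ?_⟩
    by_cases hi : (i : ℕ) + 1 < n
    · simp only [simpleRootValues, MonoidHom.coe_mk, OneHom.coe_mk, dif_pos hi,
        hf_succ i (by omega), dif_pos i.isLt, mul_inv_cancel_right]
    · have hi_last : i = lastIndex hn := by ext; simp only [lastIndex]; omega
      rw [hi_last, simpleRootValues_lastIndex]
      simp only [penultIndex, lastIndex]
      rw [hf_succ (n - 2) (by omega), show n - 2 + 1 = n - 1 by omega, hf_last,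
        dif_pos (by omega), mul_assoc, ← hc]
      exact mul_inv_cancel_left _ _

lemma exists_simpleRootValues_mul_eq_iff (k k' : Fin n → G) :
    (∃ a, simpleRootValues hn a * k = k') ↔
      IsSquare (forkQuotient hn k * (forkQuotient hn k')⁻¹) := by
  have hinv : (k' * k⁻¹)⁻¹ = k * k'⁻¹ := by rw [mul_inv_rev, inv_inv, mul_comm]
  simp_rw [← eq_mul_inv_iff_mul_eq]
  rw [← map_inv, ← map_mul, ← mem_range_simpleRootValues_iff, ← hinv, inv_mem_iff]
  rfl

end

/-- The torus action on Whittaker data for split `SO_{2n}(F)` (`n ≥ 2`):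
`(a·k)_i = a_i a_{i+1}⁻¹ k_i` for `i < n-1` and `(a·k)_{n-1} = a_{n-2} a_{n-1} k_{n-1}`
(zero-based indexing). Two tuples lie in the same orbit iff
`(k_{n-2}⁻¹ k_{n-1})·(k'_{n-2}⁻¹ k'_{n-1})⁻¹` is a square; so orbits are
parameterized by `F^×/(F^×)²`. -/
theorem stmt_9 (F : Type*) [Field F] (n : ℕ) (hn : 2 ≤ n)
    (act : (Fin n → Fˣ) → (Fin n → Fˣ) → (Fin n → Fˣ))
    (hact : ∀ (a k : Fin n → Fˣ) (i : Fin n), act a k i =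
      if h : (i : ℕ) + 1 < n then a i * (a ⟨(i : ℕ) + 1, h⟩)⁻¹ * k i
      else a ⟨n - 2, by omega⟩ * a i * k i)
    (k k' : Fin n → Fˣ) :
    (∃ a : Fin n → Fˣ, act a k = k') ↔
      ∃ c : Fˣ, ((k ⟨n - 2, by omega⟩)⁻¹ * k ⟨n - 1, by omega⟩) *
        ((k' ⟨n - 2, by omega⟩)⁻¹ * k' ⟨n - 1, by omega⟩)⁻¹ = c ^ 2 := by
  have hact_eq : ∀ a k, act a k = simpleRootValues hn a * k := fun a k => by
    ext1 i
    rw [hact, Pi.mul_apply, simpleRootValues, MonoidHom.coe_mk, OneHom.coe_mk]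
    split_ifs <;> rfl
  simp_rw [hact_eq, exists_simpleRootValues_mul_eq_iff hn, isSquare_iff_exists_sq]
  rfl
end

section
/- Let k and ℓ be positive integers, and let a_1,…,a_k, b_1,…,b_k and a'_1,…,a'_ℓ, b'_1,…,b'_ℓ be integers satisfying 0 ≤ a_1 < b_1 < a_2 < b_2 < ⋯ < a_k < b_k and 0 ≤ a'_1 < b'_1 < ⋯ < a'_ℓ < b'_ℓ. For x ∈ ℤ define m(x) = #{i : −a_i ≤ x ≤ b_i} + #{i : −a_i ≤ −x ≤ b_i}, and define m'(x) analogously from the primed data. If m(x) = m'(x) for every x ∈ ℤ, then k = ℓ and a_i = a'_i, b_i = b'_i for all 1 ≤ i ≤ k. -/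
/-!
For `x ≥ 0` the conditions `-a_i ≤ x` and `-x ≤ b_i` hold automatically, so
`m(x) = #{i | x ≤ a_i} + #{i | x ≤ b_i}` counts the terms `≥ x` of the increasing sequence
`a_1 < b_1 < a_2 < ⋯ < b_k`. A monotone sequence `c` on a finite linear order is recovered from these
counts, since `x ≤ c j` exactly when at least `#{i | j ≤ i}` terms are `≥ x`. The length is fixed by
`m(0) = 2k`.
-/

open Finset

section MonotoneCount

variable {α β : Type*} [Fintype α] [LinearOrder α] [LinearOrder β]

theorem Monotone.le_apply_iff_card_le {f : α → β} (hf : Monotone f) (x : β) (j : α) :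
    x ≤ f j ↔ #{i | j ≤ i} ≤ #{i | x ≤ f i} := by
  refine ⟨fun hx => card_le_card fun i hi => ?_, fun hcard => ?_⟩
  · simp only [mem_filter, mem_univ, true_and] at hi ⊢
    exact hx.trans (hf hi)
  · by_contra! hfj
    have hsub : ({i | x ≤ f i} : Finset α) ⊆ ({i | j < i} : Finset α) := by
      intro i
      simp only [mem_filter, mem_univ, true_and]
      intro hxi
      by_contra! hij
      exact (hxi.trans (hf hij)).not_gt hfj
    have hssub : ({i | j < i} : Finset α) ⊂ ({i | j ≤ i} : Finset α) :=
      ssubset_iff_of_subset (monotone_filter_right _ fun _ _ => le_of_lt) |>.mpr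
        ⟨j, by simp⟩
    exact hcard.not_gt ((card_le_card hsub).trans_lt (card_lt_card hssub))

theorem Monotone.eq_of_card_le_eq {f g : α → β} (hf : Monotone f) (hg : Monotone g) {lo : β}
    (hflo : ∀ i, lo ≤ f i) (hglo : ∀ i, lo ≤ g i)
    (hcard : ∀ x, lo ≤ x → #{i | x ≤ f i} = #{i | x ≤ g i}) : f = g := by
  funext j
  apply le_antisymm
  · rw [hg.le_apply_iff_card_le, ← hcard _ (hflo j), ← hf.le_apply_iff_card_le]
  · rw [hf.le_apply_iff_card_le, hcard _ (hglo j), ← hg.le_apply_iff_card_le]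

end MonotoneCount

namespace Segments

variable {k : ℕ} {a b : Fin k → ℤ}

def multiplicity (a b : Fin k → ℤ) (x : ℤ) : ℕ :=
  #{i | -a i ≤ x ∧ x ≤ b i} + #{i | -a i ≤ -x ∧ -x ≤ b i}

/-- The sequence `a_1, b_1, a_2, b_2, …`, indexed lexicographically by `(i, 0) ↦ a i`,
`(i, 1) ↦ b i`. -/
def ends (a b : Fin k → ℤ) (p : Fin k ×ₗ Fin 2) : ℤ :=
  ![a (ofLex p).1, b (ofLex p).1] (ofLex p).2

theorem right_lt_left_of_lt (hab : ∀ i, a i < b i)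
    (hba : ∀ (i : Fin k) (h : (i : ℕ) + 1 < k), b i < a ⟨(i : ℕ) + 1, h⟩) :
    ∀ ⦃i j : Fin k⦄, i < j → b i < a j := by
  rintro i ⟨j, hj⟩ hij
  induction j with
  | zero => exact absurd (Fin.lt_def.mp hij) (Nat.not_lt_zero _)
  | succ n ih =>
    have hn : n < k := by omega
    rcases Nat.lt_succ_iff_lt_or_eq.mp (Fin.lt_def.mp hij) with hin | rfl
    · exact ((ih hn hin).trans (hab _)).trans (hba ⟨n, hn⟩ hj)
    · exact hba i hj

theorem left_nonneg (hk : 0 < k) (ha0 : 0 ≤ a ⟨0, hk⟩) (hab : ∀ i, a i < b i)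
    (hlt : ∀ ⦃i j : Fin k⦄, i < j → b i < a j) (i : Fin k) : 0 ≤ a i := by
  have hmono : Monotone a := fun i j hij =>
    hij.eq_or_lt.elim (fun h => h ▸ le_rfl) fun h => ((hab i).trans (hlt h)).le
  exact ha0.trans (hmono (Nat.zero_le _))

theorem ends_monotone (hab : ∀ i, a i < b i) (hlt : ∀ ⦃i j : Fin k⦄, i < j → b i < a j) :
    Monotone (ends a b) := by
  intro p q hle
  obtain ⟨⟨i, s⟩, rfl⟩ := toLex.surjective p
  obtain ⟨⟨j, t⟩, rfl⟩ := toLex.surjective q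
  rcases Prod.Lex.toLex_le_toLex.mp hle with hij | ⟨rfl, hst⟩
  · calc ends a b (toLex (i, s)) ≤ b i := by
          fin_cases s
          · exact (hab i).le
          · exact le_rfl
      _ ≤ a j := (hlt hij).le
      _ ≤ ends a b (toLex (j, t)) := by
          fin_cases t
          · exact le_rfl
          · exact (hab j).le
  · fin_cases s <;> fin_cases t
    all_goals simp_all [ends, le_of_lt]

theorem card_filter_le_ends (x : ℤ) :
    #{p | x ≤ ends a b p} = #{i | x ≤ a i} + #{i | x ≤ b i} := by
  simp only [card_filter]
  rw [← toLex.sum_comp, Fintype.sum_prod_type]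
  simp only [ends, ofLex_toLex, Fin.sum_univ_two, sum_add_distrib, Matrix.cons_val_zero,
    Matrix.cons_val_one]
  rfl

theorem multiplicity_eq_card_filter_le_ends (ha : ∀ i, 0 ≤ a i) (hb : ∀ i, 0 ≤ b i) {x : ℤ}
    (hx : 0 ≤ x) : multiplicity a b x = #{p | x ≤ ends a b p} := by
  rw [card_filter_le_ends, add_comm, multiplicity]
  congr 1
  · exact congrArg card <| filter_congr fun i _ =>
      ⟨And.right, fun h => ⟨(neg_nonpos.mpr (ha i)).trans hx, h⟩⟩
  · exact congrArg card <| filter_congr fun i _ =>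
      ⟨fun h => neg_le_neg_iff.mp h.1, fun h => ⟨neg_le_neg h, (neg_nonpos.mpr hx).trans (hb i)⟩⟩

theorem multiplicity_zero (ha : ∀ i, 0 ≤ a i) (hb : ∀ i, 0 ≤ b i) :
    multiplicity a b 0 = 2 * k := by
  rw [multiplicity_eq_card_filter_le_ends ha hb le_rfl, card_filter_le_ends,
    filter_true_of_mem fun i _ => ha i, filter_true_of_mem fun i _ => hb i, card_univ,
    Fintype.card_fin, two_mul]

theorem ends_nonneg (ha : ∀ i, 0 ≤ a i) (hb : ∀ i, 0 ≤ b i) (p : Fin k ×ₗ Fin 2) :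
    0 ≤ ends a b p := by
  obtain ⟨⟨i, s⟩, rfl⟩ := toLex.surjective p
  fin_cases s
  exacts [ha i, hb i]

end Segments

open Segments in
/-- Uniqueness of interleaved segment data: if two families of segments
`[-a_i, b_i]` with `0 ≤ a_1 < b_1 < a_2 < b_2 < ⋯` yield the same counting
function `m(x) = #{i : -a_i ≤ x ≤ b_i} + #{i : -a_i ≤ -x ≤ b_i}` for all
integers `x`, then the families coincide. -/
theorem stmt_17 (k l : ℕ) (hk : 0 < k) (hl : 0 < l)
    (a b : Fin k → ℤ) (a' b' : Fin l → ℤ)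
    (ha0 : 0 ≤ a ⟨0, hk⟩) (ha'0 : 0 ≤ a' ⟨0, hl⟩)
    (hab : ∀ i : Fin k, a i < b i)
    (hba : ∀ (i : Fin k) (h : (i : ℕ) + 1 < k), b i < a ⟨(i : ℕ) + 1, h⟩)
    (hab' : ∀ i : Fin l, a' i < b' i)
    (hba' : ∀ (i : Fin l) (h : (i : ℕ) + 1 < l), b' i < a' ⟨(i : ℕ) + 1, h⟩)
    (hm : ∀ x : ℤ,
      ((Finset.univ.filter fun i : Fin k => -a i ≤ x ∧ x ≤ b i).card
        + (Finset.univ.filter fun i : Fin k => -a i ≤ -x ∧ -x ≤ b i).card)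
      = ((Finset.univ.filter fun i : Fin l => -a' i ≤ x ∧ x ≤ b' i).card
        + (Finset.univ.filter fun i : Fin l => -a' i ≤ -x ∧ -x ≤ b' i).card)) :
    k = l ∧ ∀ (i : ℕ) (hik : i < k) (hil : i < l),
      a ⟨i, hik⟩ = a' ⟨i, hil⟩ ∧ b ⟨i, hik⟩ = b' ⟨i, hil⟩ := by
  have hlt := right_lt_left_of_lt hab hba
  have hlt' := right_lt_left_of_lt hab' hba'
  have ha := left_nonneg hk ha0 hab hlt
  have ha' := left_nonneg hl ha'0 hab' hlt'
  have hb : ∀ i, 0 ≤ b i := fun i => (ha i).trans (hab i).le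
  have hb' : ∀ i, 0 ≤ b' i := fun i => (ha' i).trans (hab' i).le
  have hm : ∀ x, multiplicity a b x = multiplicity a' b' x := hm
  obtain rfl : k = l := by
    have h0 := hm 0
    rw [multiplicity_zero ha hb, multiplicity_zero ha' hb'] at h0
    omega
  have hends : ends a b = ends a' b' :=
    (ends_monotone hab hlt).eq_of_card_le_eq (ends_monotone hab' hlt')
      (ends_nonneg ha hb) (ends_nonneg ha' hb') fun x hx => by
        rw [← multiplicity_eq_card_filter_le_ends ha hb hx, ← multiplicity_eq_card_filter_le_ends ha' hb' hx,
          hm]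
  exact ⟨rfl, fun i hik _ =>
    ⟨congrFun hends (toLex (⟨i, hik⟩, 0)), congrFun hends (toLex (⟨i, hik⟩, 1))⟩⟩
end
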